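/- arXiv:2104.13281 — 7 statements merged into one kernel-verified Lean document; each statement's English description precedes it below -/
import Mathlib

section
/- Let C₀ be a symmetric positive definite n×n real matrix, A an m×n real matrix, and Γ a symmetric positive definite m×m real matrix. Set α > 0 and define C(t) := C₀ (E + α t AᵀΓ⁻¹A C₀)⁻¹ for t ≥ 0. Then C(t) solves the matrix ODE Ċ(t) = −α C(t) AᵀΓ⁻¹A C(t) with C(0) = C₀. -/
/-!
Write `K = Aᵀ Γ⁻¹ A`, a positive semidefinite matrix. For `c ≥ 0` the factorisation
`1 + c • (K * C₀) = (C₀⁻¹ + c • K) * C₀` exhibits `1 + c • (K * C₀)` as a product of two positive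
definite matrices, hence invertible. The derivative of an inverse, `(U⁻¹)' = -U⁻¹ U' U⁻¹`, applied
to `U(t) = 1 + α t K C₀` then gives `C' = -α C₀ U⁻¹ K C₀ U⁻¹ = -α C K C`.
-/

open Matrix

theorem HasDerivAt.ringInverse {𝕜 R : Type*} [NontriviallyNormedField 𝕜] [NormedRing R]
    [NormedAlgebra 𝕜 R] [CompleteSpace R] {f : 𝕜 → R} {f' : R} {x : 𝕜}
    (hf : HasDerivAt f f' x) (hx : IsUnit (f x)) :
    HasDerivAt (fun y => Ring.inverse (f y))
      (-(Ring.inverse (f x) * f' * Ring.inverse (f x))) x := by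
  obtain ⟨u, hu⟩ := hx
  have hinv := hasFDerivAt_ringInverse (𝕜 := 𝕜) u
  rw [← Ring.inverse_unit u, hu] at hinv
  simpa [Function.comp_def, mul_assoc] using hinv.comp_hasDerivAt x hf

namespace Matrix

variable {n : Type*} [Fintype n] [DecidableEq n]

theorem isUnit_one_add_smul_mul_of_posSemidef_of_posDef {K P : Matrix n n ℝ}
    (hK : K.PosSemidef) (hP : P.PosDef) {c : ℝ} (hc : 0 ≤ c) : IsUnit (1 + c • (K * P)) := by
  have hfactor : 1 + c • (K * P) = (P⁻¹ + c • K) * P := by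
    rw [add_mul, nonsing_inv_mul P ((isUnit_iff_isUnit_det P).mp hP.isUnit), smul_mul_assoc]
  rw [hfactor]
  exact (hP.inv.add_posSemidef (hK.smul hc)).isUnit.mul hP.isUnit

open scoped Norms.Operator in
theorem hasDerivAt_mul_inv_one_add_smul_apply (C M : Matrix n n ℝ) {t : ℝ}
    (ht : IsUnit (1 + t • M)) (i j : n) :
    HasDerivAt (fun s : ℝ => (C * (1 + s • M)⁻¹) i j)
      (-(C * (1 + t • M)⁻¹ * M * (1 + t • M)⁻¹) i j) t := by
  have : CompleteSpace (Matrix n n ℝ) := FiniteDimensional.complete ℝ _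
  have hmat := ((((hasDerivAt_id' t).smul_const M).const_add 1).ringInverse ht).const_mul C
  have hentry := (LinearMap.toContinuousLinearMap (entryLinearMap ℝ ℝ i j)).hasFDerivAt
    |>.comp_hasDerivAt t hmat
  simp only [nonsing_inv_eq_ringInverse]
  exact hentry.congr_deriv (by simp only [one_smul, Matrix.mul_neg, mul_assoc]; rfl)

end Matrix

theorem covariance_ode {n m : ℕ} (α : ℝ) (hα : 0 < α)
    (C₀ : Matrix (Fin n) (Fin n) ℝ) (hC₀ : C₀.PosDef)
    (A : Matrix (Fin m) (Fin n) ℝ)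
    (Γ : Matrix (Fin m) (Fin m) ℝ) (hΓ : Γ.PosDef)
    (C : ℝ → Matrix (Fin n) (Fin n) ℝ)
    (hC : ∀ t : ℝ, C t = C₀ * (1 + (α * t) • (Aᵀ * Γ⁻¹ * A * C₀))⁻¹) :
    C 0 = C₀ ∧
    ∀ t : ℝ, 0 ≤ t → ∀ i j : Fin n,
      HasDerivAt (fun s => C s i j) ((-α • (C t * (Aᵀ * Γ⁻¹ * A) * C t)) i j) t := by
  set K := Aᵀ * Γ⁻¹ * A
  refine ⟨by simp [hC], fun t ht i j => ?_⟩
  have hK : K.PosSemidef := by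
    simpa using hΓ.inv.posSemidef.conjTranspose_mul_mul_same A
  have hunit := isUnit_one_add_smul_mul_of_posSemidef_of_posDef hK hC₀ (mul_nonneg hα.le ht)
  have hderiv := (hasDerivAt_mul_inv_one_add_smul_apply C₀ (K * C₀) hunit i j).comp t
    ((hasDerivAt_id t).const_mul α)
  simp only [hC]
  refine hderiv.congr_deriv ?_
  simp only [mul_assoc, mul_one, neg_mul, Matrix.smul_apply, smul_eq_mul, neg_inj]
  ring
end

section
/- With the notation above, the limit C_∞ := lim_{t→∞} C(t) exists, equals S E_∞ S⁻¹ C₀ with E_∞ = diag(0,…,0,1,…,1) (k zeros, n−k ones), and satisfies A C_∞ = 0. -/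
/-!
With `B = AᵀΓ⁻¹A`, the push-through identity `C₀ (1 + c B C₀)⁻¹ = (1 + c C₀ B)⁻¹ C₀` and the
diagonalisation `C₀ B = S D S⁻¹` give `C(t) = S diag((1 + α t μᵢ)⁻¹) S⁻¹ C₀` for `t ≥ 0`. The
diagonal entries tend to `0` where `μᵢ > 0` and are constantly `1` where `μᵢ = 0`, so `C(t) → C_∞`
by continuity of matrix multiplication.

Since `D E_∞ = 0`, `C₀ B C_∞ = S D E_∞ S⁻¹ C₀ = 0`, hence `B C_∞ = 0` as `C₀` is invertible. Then
`(A C_∞)ᵀ Γ⁻¹ (A C_∞) = C_∞ᵀ B C_∞ = 0`, and positive definiteness of `Γ⁻¹` forces `A C_∞ = 0`.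
-/

open Matrix Filter Topology

namespace Matrix

section Conjugation

variable {n : Type*} [Fintype n] [DecidableEq n] {R : Type*} [CommRing R] {S : Matrix n n R}

theorem conj_diagonal_mul_conj_diagonal (hS : IsUnit S.det) (a b : n → R) :
    S * diagonal a * S⁻¹ * (S * diagonal b * S⁻¹) = S * diagonal (a * b) * S⁻¹ := by
  rw [show diagonal (a * b) = diagonal a * diagonal b from (diagonal_mul_diagonal a b).symm]
  simp only [Matrix.mul_assoc, nonsing_inv_mul_cancel_left _ _ hS]

theorem one_add_smul_conj_diagonal (hS : IsUnit S.det) (c : R) (d : n → R) :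
    1 + c • (S * diagonal d * S⁻¹) = S * diagonal (fun i => 1 + c * d i) * S⁻¹ := by
  have : diagonal (fun i => 1 + c * d i) = 1 + c • diagonal d := by
    rw [← diagonal_one, ← diagonal_smul, diagonal_add]; rfl
  rw [this, Matrix.mul_add, Matrix.add_mul, Matrix.mul_one, mul_nonsing_inv _ hS,
    Matrix.mul_smul, Matrix.smul_mul]

theorem inv_conj_diagonal {K : Type*} [Field K] {S : Matrix n n K} (hS : IsUnit S.det)
    {d : n → K} (hd : ∀ i, d i ≠ 0) :
    (S * diagonal d * S⁻¹)⁻¹ = S * diagonal (fun i => (d i)⁻¹) * S⁻¹ := by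
  refine inv_eq_right_inv ?_
  rw [conj_diagonal_mul_conj_diagonal hS]
  have : d * (fun i => (d i)⁻¹) = 1 := funext fun i => mul_inv_cancel₀ (hd i)
  rw [this, Pi.one_def, diagonal_one, Matrix.mul_one, mul_nonsing_inv _ hS]

end Conjugation

theorem mul_inv_one_add_mul_comm {m n : Type*} [Fintype m] [Fintype n] [DecidableEq m]
    [DecidableEq n] {R : Type*} [CommRing R] (X : Matrix m n R) (Y : Matrix n m R) :
    X * (1 + Y * X)⁻¹ = (1 + X * Y)⁻¹ * X := by
  by_cases h : IsUnit (1 + X * Y).det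
  · have h' : IsUnit (1 + Y * X).det := det_one_add_mul_comm X Y ▸ h
    have hcomm : (1 + X * Y) * X = X * (1 + Y * X) := by
      rw [Matrix.add_mul, Matrix.mul_add, Matrix.one_mul, Matrix.mul_one, Matrix.mul_assoc]
    calc X * (1 + Y * X)⁻¹ = (1 + X * Y)⁻¹ * ((1 + X * Y) * X) * (1 + Y * X)⁻¹ := by
          rw [nonsing_inv_mul_cancel_left _ _ h]
      _ = (1 + X * Y)⁻¹ * X := by
          rw [hcomm, Matrix.mul_assoc, Matrix.mul_assoc, mul_nonsing_inv _ h', Matrix.mul_one]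
  · -- both inverses are the junk value `0`
    have h' : ¬IsUnit (1 + Y * X).det := det_one_add_mul_comm X Y ▸ h
    rw [nonsing_inv_apply_not_isUnit _ h, nonsing_inv_apply_not_isUnit _ h', Matrix.mul_zero,
      Matrix.zero_mul]

theorem mul_inv_one_add_smul_mul_eq_conj_diagonal {m n : Type*} [Fintype m] [Fintype n]
    [DecidableEq m] [DecidableEq n] {K : Type*} [Field K] {C : Matrix n m K} {B : Matrix m n K}
    {S : Matrix n n K} {μ : n → K} (hS : IsUnit S.det) (hCB : C * B = S * diagonal μ * S⁻¹)
    {c : K} (hc : ∀ i, 1 + c * μ i ≠ 0) :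
    C * (1 + c • (B * C))⁻¹ = S * diagonal (fun i => (1 + c * μ i)⁻¹) * S⁻¹ * C := by
  rw [← Matrix.smul_mul, mul_inv_one_add_mul_comm, Matrix.mul_smul, hCB,
    one_add_smul_conj_diagonal hS, inv_conj_diagonal hS hc]

theorem PosDef.eq_zero_of_conjTranspose_mul_mul_eq_zero {m n : Type*} [Fintype m] [Fintype n]
    {R : Type*} [Ring R] [PartialOrder R] [StarRing R] {P : Matrix m m R} (hP : P.PosDef)
    {Z : Matrix m n R} (h : Zᴴ * P * Z = 0) : Z = 0 := by
  refine ext_iff_mulVec.2 fun v => ?_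
  by_contra hv
  rw [zero_mulVec] at hv
  have hpos := hP.dotProduct_mulVec_pos hv
  rw [star_mulVec, dotProduct_mulVec, vecMul_vecMul, ← dotProduct_mulVec, mulVec_mulVec, h,
    zero_mulVec, dotProduct_zero] at hpos
  exact hpos.false

theorem PosDef.mul_eq_zero_of_transpose_mul_mul_mul_eq_zero {l m n : Type*} [Fintype l]
    [Fintype m] [Fintype n] {R : Type*} [CommRing R] [PartialOrder R] [StarRing R] [TrivialStar R]
    {P : Matrix m m R} (hP : P.PosDef) {A : Matrix m n R} {X : Matrix n l R}
    (h : Aᵀ * P * A * X = 0) : A * X = 0 := by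
  refine hP.eq_zero_of_conjTranspose_mul_mul_eq_zero ?_
  rw [conjTranspose_eq_transpose_of_trivial, transpose_mul]
  simp only [Matrix.mul_assoc] at h ⊢
  rw [h, Matrix.mul_zero]

end Matrix

theorem tendsto_inv_one_add_mul_mul_atTop {a b : ℝ} (ha : 0 < a) (hb : 0 < b) :
    Tendsto (fun t => (1 + a * t * b)⁻¹) atTop (𝓝 0) :=
  tendsto_inv_atTop_zero.comp <| tendsto_atTop_add_const_left _ 1 <|
    (tendsto_id.const_mul_atTop ha).atTop_mul_const hb

theorem covariance_limit_general {n m k : ℕ} (α : ℝ) (hα : 0 < α)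
    (C₀ : Matrix (Fin n) (Fin n) ℝ) (hC₀ : C₀.PosDef)
    (A : Matrix (Fin m) (Fin n) ℝ)
    (Γ : Matrix (Fin m) (Fin m) ℝ) (hΓ : Γ.PosDef)
    (S : Matrix (Fin n) (Fin n) ℝ) (μ : Fin n → ℝ)
    (hS : IsUnit S.det)
    (hμpos : ∀ i : Fin n, (i : ℕ) < k → 0 < μ i)
    (hμzero : ∀ i : Fin n, k ≤ (i : ℕ) → μ i = 0)
    (hdiag : C₀ * Aᵀ * Γ⁻¹ * A = S * Matrix.diagonal μ * S⁻¹)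
    (C : ℝ → Matrix (Fin n) (Fin n) ℝ)
    (hC : ∀ t : ℝ, C t = C₀ * (1 + (α * t) • (Aᵀ * Γ⁻¹ * A * C₀))⁻¹)
    (Cinf : Matrix (Fin n) (Fin n) ℝ)
    (hCinf : Cinf =
      S * Matrix.diagonal (fun i : Fin n => if (i : ℕ) < k then (0 : ℝ) else 1) * S⁻¹ * C₀) :
    (∀ i j : Fin n, Tendsto (fun t : ℝ => C t i j) atTop (𝓝 (Cinf i j))) ∧
    A * Cinf = 0 := by
  set E : Fin n → ℝ := fun i => if (i : ℕ) < k then 0 else 1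
  have hCB : C₀ * (Aᵀ * Γ⁻¹ * A) = S * diagonal μ * S⁻¹ := by
    rw [← hdiag]; simp only [Matrix.mul_assoc]
  have hμ_nonneg : ∀ i, 0 ≤ μ i := fun i =>
    (lt_or_ge (i : ℕ) k).elim (fun hi => (hμpos i hi).le) fun hi => (hμzero i hi).ge
  have hC_eq : ∀ᶠ t in atTop, S * diagonal (fun i => (1 + α * t * μ i)⁻¹) * S⁻¹ * C₀ = C t := by
    filter_upwards [eventually_ge_atTop 0] with t ht
    refine ((hC t).trans (mul_inv_one_add_smul_mul_eq_conj_diagonal hS hCB fun i => ?_)).symm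
    have := hμ_nonneg i
    positivity
  have hdecay : Tendsto (fun t i => (1 + α * t * μ i)⁻¹) atTop (𝓝 E) := by
    refine tendsto_pi_nhds.2 fun i => ?_
    by_cases hi : (i : ℕ) < k
    · simpa [E, hi] using tendsto_inv_one_add_mul_mul_atTop hα (hμpos i hi)
    · simp [E, hi, hμzero i (not_lt.1 hi)]
  have hlim : Tendsto C atTop (𝓝 Cinf) := by
    have hcont : Continuous fun v : Fin n → ℝ => S * diagonal v * S⁻¹ * C₀ := by fun_prop
    exact hCinf ▸ ((hcont.tendsto E).comp hdecay).congr' hC_eq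
  refine ⟨fun i j => ((continuous_id.matrix_elem i j).tendsto Cinf).comp hlim, ?_⟩
  have hμE : μ * E = 0 := funext fun i => by
    by_cases hi : (i : ℕ) < k
    · simp [E, hi]
    · simp [hμzero i (not_lt.1 hi)]
  refine hΓ.inv.mul_eq_zero_of_transpose_mul_mul_mul_eq_zero <| hC₀.isUnit.mul_right_eq_zero.1 ?_
  rw [← Matrix.mul_assoc, hCB, hCinf, ← Matrix.mul_assoc, conj_diagonal_mul_conj_diagonal hS, hμE,
    Pi.zero_def, diagonal_zero, Matrix.mul_zero, Matrix.zero_mul, Matrix.zero_mul]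

theorem covariance_limit {n m k : ℕ} (hk : k ≤ n) (α : ℝ) (hα : 0 < α)
    (C₀ : Matrix (Fin n) (Fin n) ℝ) (hC₀ : C₀.PosDef)
    (A : Matrix (Fin m) (Fin n) ℝ)
    (Γ : Matrix (Fin m) (Fin m) ℝ) (hΓ : Γ.PosDef)
    (S : Matrix (Fin n) (Fin n) ℝ) (μ : Fin n → ℝ)
    (hS : IsUnit S.det)
    (hμpos : ∀ i : Fin n, (i : ℕ) < k → 0 < μ i)
    (hμzero : ∀ i : Fin n, k ≤ (i : ℕ) → μ i = 0)
    (hdiag : C₀ * Aᵀ * Γ⁻¹ * A = S * Matrix.diagonal μ * S⁻¹)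
    (C : ℝ → Matrix (Fin n) (Fin n) ℝ)
    (hC : ∀ t : ℝ, C t = C₀ * (1 + (α * t) • (Aᵀ * Γ⁻¹ * A * C₀))⁻¹)
    (Cinf : Matrix (Fin n) (Fin n) ℝ)
    (hCinf : Cinf =
      S * Matrix.diagonal (fun i : Fin n => if (i : ℕ) < k then (0 : ℝ) else 1) * S⁻¹ * C₀) :
    (∀ i j : Fin n, Tendsto (fun t : ℝ => C t i j) atTop (𝓝 (Cinf i j))) ∧
    A * Cinf = 0 :=
  covariance_limit_general α hα C₀ hC₀ A Γ hΓ S μ hS hμpos hμzero hdiag C hC Cinf hCinf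
end

section
/- Define the nonlinear operator 𝒜 on n×n matrices by 𝒜(C) = α C AᵀΓ⁻¹A C, and let C(t) = C₀(E + α t AᵀΓ⁻¹A C₀)⁻¹ with C_∞ = lim_{t→∞} C(t). Then the limit Ĉ := lim_{t→∞} t(C(t) − C_∞) exists and satisfies the eigenvector equation 𝒜(Ĉ) = Ĉ. -/
open Matrix Filter Topology

theorem asymptotic_profile {n m k : ℕ} (hk : k ≤ n) (α : ℝ) (hα : 0 < α)
    (C₀ : Matrix (Fin n) (Fin n) ℝ) (hC₀ : C₀.PosDef)
    (A : Matrix (Fin m) (Fin n) ℝ)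
    (Γ : Matrix (Fin m) (Fin m) ℝ) (hΓ : Γ.PosDef)
    (S : Matrix (Fin n) (Fin n) ℝ) (μ : Fin n → ℝ)
    (hS : IsUnit S.det)
    (hμpos : ∀ i : Fin n, (i : ℕ) < k → 0 < μ i)
    (hμzero : ∀ i : Fin n, k ≤ (i : ℕ) → μ i = 0)
    (hdiag : C₀ * Aᵀ * Γ⁻¹ * A = S * Matrix.diagonal μ * S⁻¹)
    (C : ℝ → Matrix (Fin n) (Fin n) ℝ)
    (hC : ∀ t : ℝ, C t = C₀ * (1 + (α * t) • (Aᵀ * Γ⁻¹ * A * C₀))⁻¹)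
    (Cinf : Matrix (Fin n) (Fin n) ℝ)
    (hCinf : Cinf =
      S * Matrix.diagonal (fun i : Fin n => if (i : ℕ) < k then (0 : ℝ) else 1) * S⁻¹ * C₀) :
    ∃ Chat : Matrix (Fin n) (Fin n) ℝ,
      (∀ i j : Fin n,
        Tendsto (fun t : ℝ => t * (C t i j - Cinf i j)) atTop (𝓝 (Chat i j))) ∧
      α • (Chat * (Aᵀ * Γ⁻¹ * A) * Chat) = Chat := by
  have hS' : S⁻¹ * S = 1 := Matrix.nonsing_inv_mul S hS
  have hS'' : S * S⁻¹ = 1 := Matrix.mul_nonsing_inv S hS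
  have hdiag' : C₀ * (Aᵀ * Γ⁻¹ * A) = S * Matrix.diagonal μ * S⁻¹ := by
    rw [← Matrix.mul_assoc, ← Matrix.mul_assoc]; exact hdiag
  set M : Matrix (Fin n) (Fin n) ℝ := Aᵀ * Γ⁻¹ * A with hM
  set T : Matrix (Fin n) (Fin n) ℝ := S⁻¹ * C₀ with hT
  set c : Fin n → ℝ := fun i => if (i : ℕ) < k then (α * μ i)⁻¹ else 0 with hc
  set e : Fin n → ℝ := fun i : Fin n => if (i : ℕ) < k then (0 : ℝ) else 1 with he
  -- right-associated helper identities
  have hSS : ∀ X : Matrix (Fin n) (Fin n) ℝ, S⁻¹ * (S * X) = X := fun X => by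
    rw [← Matrix.mul_assoc, hS', Matrix.one_mul]
  have hDD : ∀ (a b : Fin n → ℝ) (X : Matrix (Fin n) (Fin n) ℝ),
      Matrix.diagonal a * (Matrix.diagonal b * X)
        = Matrix.diagonal (fun i => a i * b i) * X := fun a b X => by
    rw [← Matrix.mul_assoc, Matrix.diagonal_mul_diagonal]
  have hCM : ∀ X : Matrix (Fin n) (Fin n) ℝ,
      C₀ * (M * X) = S * (Matrix.diagonal μ * (S⁻¹ * X)) := fun X => by
    rw [← Matrix.mul_assoc, hdiag', Matrix.mul_assoc, Matrix.mul_assoc]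
  refine ⟨S * Matrix.diagonal c * T, ?_, ?_⟩
  · -- limits
    intro i j
    have expand : ∀ (w : Fin n → ℝ), (S * Matrix.diagonal w * T) i j
        = ∑ l, S i l * w l * T l j := by
      intro w
      rw [Matrix.mul_apply]
      simp [Matrix.mul_diagonal]
    -- formula for C t
    have key2 : ∀ t : ℝ, 0 ≤ t →
        C t = S * Matrix.diagonal (fun i => (1 + α * t * μ i)⁻¹) * T := by
      intro t ht
      have hpos : ∀ i, 0 < 1 + α * t * μ i := by
        intro i
        rcases lt_or_ge (i : ℕ) k with h | h
        · have := hμpos i h; positivity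
        · rw [hμzero i h]; norm_num
      set X := S * Matrix.diagonal (fun i => (1 + α * t * μ i)⁻¹) * T with hX
      set Y := 1 + (α * t) • (M * C₀) with hY
      have hXY : X * Y = C₀ := by
        rw [hX, hY, hT, Matrix.mul_add, Matrix.mul_one, Matrix.mul_smul]
        simp only [Matrix.mul_assoc]
        rw [hCM, hSS, hDD]
        rw [← Matrix.mul_smul, ← Matrix.smul_mul, ← Matrix.diagonal_smul, ← Matrix.mul_add,
          ← Matrix.add_mul, Matrix.diagonal_add]
        have hone : (fun i => ((fun i => (1 + α * t * μ i)⁻¹) i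
            + ((α * t) • fun i => (1 + α * t * μ i)⁻¹ * μ i) i)) = fun _ : Fin n => (1:ℝ) := by
          funext i
          have h0 := (hpos i).ne'
          simp only [Pi.smul_apply, smul_eq_mul]
          field_simp
        rw [hone, Matrix.diagonal_one, Matrix.one_mul, ← Matrix.mul_assoc, hS'', Matrix.one_mul]
      have hYdet : IsUnit Y.det := by
        have hd : X.det * Y.det = C₀.det := by rw [← Matrix.det_mul, hXY]
        have hC₀det : IsUnit C₀.det := isUnit_iff_ne_zero.mpr hC₀.det_pos.ne'
        rw [← hd] at hC₀det
        exact isUnit_of_mul_isUnit_right hC₀det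
      rw [hC t, ← hY, ← hXY, Matrix.mul_assoc, Matrix.mul_nonsing_inv _ hYdet, Matrix.mul_one]
    -- eventual equality with a sum
    have hkey : (fun t : ℝ => t * (C t i j - Cinf i j)) =ᶠ[atTop]
        fun t => ∑ l, S i l * (t * ((1 + α * t * μ l)⁻¹ - e l)) * T l j := by
      filter_upwards [eventually_ge_atTop (0 : ℝ)] with t ht
      have hCinf' : Cinf = S * Matrix.diagonal e * T := by
        rw [hCinf, Matrix.mul_assoc, hT]
      rw [key2 t ht, hCinf', expand, expand, ← Finset.sum_sub_distrib, Finset.mul_sum]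
      exact Finset.sum_congr rfl fun l _ => by ring
    have hlim : Tendsto (fun t : ℝ => ∑ l, S i l * (t * ((1 + α * t * μ l)⁻¹ - e l)) * T l j)
        atTop (𝓝 (∑ l, S i l * c l * T l j)) := by
      apply tendsto_finset_sum
      intro l _
      have hl : Tendsto (fun t : ℝ => t * ((1 + α * t * μ l)⁻¹ - e l)) atTop (𝓝 (c l)) := by
        rcases lt_or_ge (l : ℕ) k with h | h
        · have hμ := hμpos l h
          simp only [hc, he, if_pos h]
          have h1 : Tendsto (fun t : ℝ => (t⁻¹ + α * μ l)⁻¹) atTop (𝓝 ((α * μ l)⁻¹)) := by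
            apply Tendsto.inv₀
            · simpa using tendsto_inv_atTop_zero.add (tendsto_const_nhds (x := α * μ l))
            · positivity
          apply h1.congr'
          filter_upwards [eventually_gt_atTop (0 : ℝ)] with t ht
          have h2 : (0:ℝ) < 1 + α * t * μ l := by positivity
          have h3 : t⁻¹ + α * μ l = (1 + α * t * μ l) / t := by
            field_simp
          rw [sub_zero, h3, inv_div, div_eq_mul_inv]
        · have hz := hμzero l h
          simp only [hc, he, if_neg (not_lt.mpr h), hz, mul_zero, add_zero, inv_one, sub_self]
          exact tendsto_const_nhds
      exact (hl.const_mul _).mul_const _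
    rw [expand]
    exact hlim.congr' hkey.symm
  · -- eigenvector equation
    simp only [Matrix.mul_assoc, hT]
    rw [show S⁻¹ * (C₀ * (M * (S * (Matrix.diagonal c * (S⁻¹ * C₀))))) =
        Matrix.diagonal μ * (Matrix.diagonal c * (S⁻¹ * C₀)) from by
      rw [hCM, hSS, hSS]]
    rw [hDD c, hDD _ c]
    have hw : α • (fun i => (fun i => c i * μ i) i * c i) = c := by
      funext i
      simp only [Pi.smul_apply, smul_eq_mul, hc]
      split_ifs with h
      · have hμ := hμpos i h
        field_simp
      · ring
    rw [← Matrix.mul_smul, ← Matrix.smul_mul, ← Matrix.diagonal_smul, hw]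
end

section
/- With diagonalization C₀AᵀΓ⁻¹A = S diag(μ₁,…,μ_k,0,…,0) S⁻¹ (μ_i > 0) and C(t) = C₀(E+αtAᵀΓ⁻¹AC₀)⁻¹, it holds that lim_{t→∞} (C(t)C₀⁻¹)^{1/α} ∫₀ᵗ (C(s)C₀⁻¹)^{1−1/α} ds · C₀AᵀΓ⁻¹A = S(E − E_∞)S⁻¹ = E − C_∞C₀⁻¹, where E_∞ = diag(0,…,0,1,…,1) with k zeros. -/
/-! Everything is diagonal in the eigenbasis `S`, so the claim reduces to the scalar limit
`(1 + αtμ)^(-1/α) · μ ∫₀ᵗ (1 + αsμ)^(1/α - 1) ds = 1 - (1 + αtμ)^(-1/α) → 1` for `μ > 0`,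
while the eigenvalues `μ = 0` contribute `0`. -/

open Matrix Filter Topology

/-- Spectral power `(C(t)C₀⁻¹)^(-p) = S diag((1+αtμᵢ)^p) S⁻¹`, defined via the
shared diagonalization `C₀AᵀΓ⁻¹A = S diag(μ) S⁻¹`. -/
noncomputable def specPow {n : ℕ} (S : Matrix (Fin n) (Fin n) ℝ) (μ : Fin n → ℝ)
    (α p t : ℝ) : Matrix (Fin n) (Fin n) ℝ :=
  S * Matrix.diagonal (fun i => (1 + α * t * μ i) ^ (p : ℝ)) * S⁻¹

section Conjugation

variable {ι R : Type*} [Fintype ι] [DecidableEq ι]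

theorem Matrix.mul_diagonal_mul_apply [CommSemiring R] (S T : Matrix ι ι R) (d : ι → R)
    (i j : ι) : (S * diagonal d * T) i j = ∑ l, S i l * d l * T l j := by
  rw [mul_apply]
  simp [mul_diagonal]

theorem Matrix.conj_diagonal_mul_conj_diagonal_s10 [CommRing R] {S : Matrix ι ι R}
    (hS : IsUnit S.det) (d₁ d₂ : ι → R) :
    S * diagonal d₁ * S⁻¹ * (S * diagonal d₂ * S⁻¹) = S * diagonal (d₁ * d₂) * S⁻¹ := by
  rw [Matrix.mul_assoc (S * diagonal d₁), ← Matrix.mul_assoc S⁻¹, ← Matrix.mul_assoc S⁻¹,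
    nonsing_inv_mul S hS, Matrix.one_mul, ← Matrix.mul_assoc, Matrix.mul_assoc S,
    diagonal_mul_diagonal]
  rfl

theorem Matrix.tendsto_mul_diagonal_mul [TopologicalSpace R] [CommSemiring R]
    [IsTopologicalSemiring R] {β : Type*} {F : Filter β} (S T : Matrix ι ι R)
    {d : β → ι → R} {d' : ι → R} (hd : ∀ l, Tendsto (fun b => d b l) F (𝓝 (d' l))) :
    Tendsto (fun b => S * diagonal (d b) * T) F (𝓝 (S * diagonal d' * T)) := by
  have hcont : Continuous fun e : ι → R => S * diagonal e * T :=
    (continuous_const.matrix_mul continuous_id.matrix_diagonal).matrix_mul continuous_const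
  exact hcont.continuousAt.tendsto.comp (tendsto_pi_nhds.2 hd)

theorem Matrix.intervalIntegral_mul_diagonal_mul (S T : Matrix ι ι ℝ) {f : ι → ℝ → ℝ}
    {a b : ℝ} (hf : ∀ l, IntervalIntegrable (f l) MeasureTheory.volume a b) :
    Matrix.of (fun i j => ∫ s in a..b, (S * diagonal (fun l => f l s) * T) i j)
      = S * diagonal (fun l => ∫ s in a..b, f l s) * T := by
  ext i j
  simp only [of_apply, mul_diagonal_mul_apply]
  rw [intervalIntegral.integral_finsetSum fun l _ =>
    ((hf l).const_mul (S i l)).mul_const (T l j)]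
  refine Finset.sum_congr rfl fun l _ => ?_
  rw [intervalIntegral.integral_mul_const, intervalIntegral.integral_const_mul]

end Conjugation

section Scalar

variable {α μ : ℝ}

theorem hasDerivAt_one_add_mul_rpow_inv_div (hα : 0 < α) (hμ : μ ≠ 0) {s : ℝ}
    (hs : 0 < 1 + α * s * μ) :
    HasDerivAt (fun s => (1 + α * s * μ) ^ (1 / α) / μ) ((1 + α * s * μ) ^ (1 / α - 1)) s := by
  have hlin : HasDerivAt (fun s : ℝ => 1 + α * s * μ) (α * μ) s := by
    simpa using (((hasDerivAt_id s).const_mul α).mul_const μ).const_add 1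
  refine (((Real.hasDerivAt_rpow_const (p := 1 / α) (Or.inl hs.ne')).comp s hlin).div_const μ)
    |>.congr_deriv ?_
  field_simp

theorem integral_one_add_mul_rpow (hα : 0 < α) (hμ : 0 < μ) {t : ℝ} (ht : 0 ≤ t) :
    ∫ s in (0 : ℝ)..t, (1 + α * s * μ) ^ (1 / α - 1)
      = ((1 + α * t * μ) ^ (1 / α) - 1) / μ := by
  have hpos : ∀ s ∈ Set.uIcc 0 t, 0 < 1 + α * s * μ := by
    intro s hs
    rw [Set.uIcc_of_le ht] at hs
    have := hs.1
    positivity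
  rw [intervalIntegral.integral_eq_sub_of_hasDerivAt
      (fun s hs => hasDerivAt_one_add_mul_rpow_inv_div hα hμ.ne' (hpos s hs))
      (ContinuousOn.intervalIntegrable
        (ContinuousOn.rpow_const (by fun_prop) fun s hs => Or.inl (hpos s hs).ne'))]
  simp [sub_div]

theorem tendsto_one_add_mul_rpow_mul_integral (hα : 0 < α) (hμ : 0 ≤ μ) :
    Tendsto (fun t : ℝ => (1 + α * t * μ) ^ (-(1 / α)) *
        ((∫ s in (0 : ℝ)..t, (1 + α * s * μ) ^ (1 / α - 1)) * μ))
      atTop (𝓝 (if 0 < μ then 1 else 0)) := by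
  rcases hμ.eq_or_lt with rfl | hμ
  · simp
  rw [if_pos hμ]
  have hbase : Tendsto (fun t : ℝ => 1 + α * t * μ) atTop atTop :=
    tendsto_atTop_add_const_left _ _
      ((tendsto_id.const_mul_atTop hα).atTop_mul_const hμ)
  have hdecay : Tendsto (fun t : ℝ => 1 - (1 + α * t * μ) ^ (-(1 / α))) atTop (𝓝 1) := by
    simpa using tendsto_const_nhds.sub ((tendsto_rpow_neg_atTop (by positivity)).comp hbase)
  refine hdecay.congr' ?_
  filter_upwards [eventually_ge_atTop 0] with t ht
  have hx : 0 < 1 + α * t * μ := by positivity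
  have hy : 0 < (1 + α * t * μ) ^ (1 / α) := Real.rpow_pos_of_pos hx _
  rw [integral_one_add_mul_rpow hα hμ ht, Real.rpow_neg hx.le]
  field_simp

end Scalar

theorem specPow_mul_integral_specPow_mul {n : ℕ} {S : Matrix (Fin n) (Fin n) ℝ}
    (hS : IsUnit S.det) {μ : Fin n → ℝ} (hμ : ∀ l, 0 ≤ μ l) {α : ℝ} (hα : 0 < α)
    {t : ℝ} (ht : 0 ≤ t) :
    specPow S μ α (-(1 / α)) t *
        Matrix.of (fun i j => ∫ s in (0 : ℝ)..t, specPow S μ α (1 / α - 1) s i j) *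
        (S * diagonal μ * S⁻¹)
      = S * diagonal (fun l => (1 + α * t * μ l) ^ (-(1 / α)) *
          ((∫ s in (0 : ℝ)..t, (1 + α * s * μ l) ^ (1 / α - 1)) * μ l)) * S⁻¹ := by
  have hint : ∀ l, IntervalIntegrable (fun s => (1 + α * s * μ l) ^ (1 / α - 1))
      MeasureTheory.volume 0 t := by
    refine fun l => ContinuousOn.intervalIntegrable
      (ContinuousOn.rpow_const (by fun_prop) fun s hs => Or.inl ?_)
    rw [Set.uIcc_of_le ht] at hs
    have := hs.1
    have := hμ l
    positivity
  unfold specPow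
  rw [intervalIntegral_mul_diagonal_mul S S⁻¹ hint,
    conj_diagonal_mul_conj_diagonal_s10 hS, conj_diagonal_mul_conj_diagonal_s10 hS]
  simp only [Pi.mul_def, mul_assoc]

theorem integral_limit_general {n m k : ℕ} (α : ℝ) (hα : 1 ≤ α)
    (C₀ : Matrix (Fin n) (Fin n) ℝ) (hC₀ : C₀.PosDef)
    (A : Matrix (Fin m) (Fin n) ℝ)
    (Γ : Matrix (Fin m) (Fin m) ℝ)
    (S : Matrix (Fin n) (Fin n) ℝ) (μ : Fin n → ℝ)
    (hS : IsUnit S.det)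
    (hμpos : ∀ i : Fin n, (i : ℕ) < k → 0 < μ i)
    (hμzero : ∀ i : Fin n, k ≤ (i : ℕ) → μ i = 0)
    (hdiag : C₀ * Aᵀ * Γ⁻¹ * A = S * Matrix.diagonal μ * S⁻¹)
    (Einf : Matrix (Fin n) (Fin n) ℝ)
    (hEinf : Einf = Matrix.diagonal (fun i : Fin n => if (i : ℕ) < k then (0 : ℝ) else 1))
    (Cinf : Matrix (Fin n) (Fin n) ℝ) (hCinf : Cinf = S * Einf * S⁻¹ * C₀) :
    (∀ i j : Fin n,
      Tendsto
        (fun t : ℝ =>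
          (specPow S μ α (-(1 / α)) t *
            Matrix.of (fun i j => ∫ s in (0:ℝ)..t, specPow S μ α (1 / α - 1) s i j) *
            (C₀ * Aᵀ * Γ⁻¹ * A)) i j)
        atTop (𝓝 ((S * (1 - Einf) * S⁻¹) i j))) ∧
    S * (1 - Einf) * S⁻¹ = 1 - Cinf * C₀⁻¹ := by
  have hα0 : 0 < α := by linarith
  have hμ : ∀ l, 0 ≤ μ l := fun l =>
    (lt_or_ge (l : ℕ) k).elim (fun hl => (hμpos l hl).le) fun hl => (hμzero l hl).ge
  have hrange : 1 - Einf = diagonal fun l => if 0 < μ l then 1 else 0 := by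
    rw [hEinf, ← diagonal_one, diagonal_sub]
    congr 1
    funext l
    rcases lt_or_ge (l : ℕ) k with hl | hl
    · simp [hl, hμpos l hl]
    · simp [hμzero l hl, hl.not_gt]
  refine ⟨fun i j => ?_, ?_⟩
  · have hlim := tendsto_mul_diagonal_mul S S⁻¹
      fun l => tendsto_one_add_mul_rpow_mul_integral hα0 (hμ l)
    rw [hrange]
    refine (tendsto_pi_nhds.1 (tendsto_pi_nhds.1 hlim i) j).congr' ?_
    filter_upwards [eventually_ge_atTop 0] with t ht
    rw [hdiag, specPow_mul_integral_specPow_mul hS hμ hα0 ht]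
  · rw [hCinf, mul_nonsing_inv_cancel_right C₀ _ hC₀.det_pos.ne'.isUnit, mul_sub, mul_one,
      sub_mul, mul_nonsing_inv S hS]

theorem integral_limit {n m k : ℕ} (hk : k ≤ n) (α : ℝ) (hα : 1 ≤ α)
    (C₀ : Matrix (Fin n) (Fin n) ℝ) (hC₀ : C₀.PosDef)
    (A : Matrix (Fin m) (Fin n) ℝ)
    (Γ : Matrix (Fin m) (Fin m) ℝ) (hΓ : Γ.PosDef)
    (S : Matrix (Fin n) (Fin n) ℝ) (μ : Fin n → ℝ)
    (hS : IsUnit S.det)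
    (hμpos : ∀ i : Fin n, (i : ℕ) < k → 0 < μ i)
    (hμzero : ∀ i : Fin n, k ≤ (i : ℕ) → μ i = 0)
    (hdiag : C₀ * Aᵀ * Γ⁻¹ * A = S * Matrix.diagonal μ * S⁻¹)
    (C : ℝ → Matrix (Fin n) (Fin n) ℝ)
    (hC : ∀ t : ℝ, C t = C₀ * (1 + (α * t) • (Aᵀ * Γ⁻¹ * A * C₀))⁻¹)
    (Einf : Matrix (Fin n) (Fin n) ℝ)
    (hEinf : Einf = Matrix.diagonal (fun i : Fin n => if (i : ℕ) < k then (0 : ℝ) else 1))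
    (Cinf : Matrix (Fin n) (Fin n) ℝ) (hCinf : Cinf = S * Einf * S⁻¹ * C₀) :
    (∀ i j : Fin n,
      Tendsto
        (fun t : ℝ =>
          (specPow S μ α (-(1 / α)) t *
            Matrix.of (fun i j => ∫ s in (0:ℝ)..t, specPow S μ α (1 / α - 1) s i j) *
            (C₀ * Aᵀ * Γ⁻¹ * A)) i j)
        atTop (𝓝 ((S * (1 - Einf) * S⁻¹) i j))) ∧
    S * (1 - Einf) * S⁻¹ = 1 - Cinf * C₀⁻¹ :=
  integral_limit_general α hα C₀ hC₀ A Γ S μ hS hμpos hμzero hdiag Einf hEinf Cinf hCinf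
end

section
/- Define (AᵀΓ⁻¹A)⁻ := S D⁺ S⁻¹ C₀, where C₀AᵀΓ⁻¹A = S D S⁻¹ and D⁺ is the diagonal pseudo-inverse of D. Then (AᵀΓ⁻¹A)⁻ (AᵀΓ⁻¹A) (AᵀΓ⁻¹A)⁻ = (AᵀΓ⁻¹A)⁻ and (AᵀΓ⁻¹A)(AᵀΓ⁻¹A)⁻(AᵀΓ⁻¹A) = AᵀΓ⁻¹A, but (AᵀΓ⁻¹A)⁻(AᵀΓ⁻¹A) = S D⁺D S⁻¹ need not be symmetric (so (AᵀΓ⁻¹A)⁻ is in general not the Moore–Penrose pseudo-inverse). -/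
/-!
Both identities are instances of one fact: if `P` is a reflexive generalized inverse of `D`
(`P D P = P`, `D P D = D`), then `S P U` is one of `T D V` whenever `U T = 1` and `V S = 1`.
From `C₀ AᵀΓ⁻¹A = S D S⁻¹` we get `AᵀΓ⁻¹A = (C₀⁻¹ S) D S⁻¹` and `(AᵀΓ⁻¹A)⁻ = S D⁺ (S⁻¹ C₀)`,
which is of this shape with `T = C₀⁻¹ S`, `U = S⁻¹ C₀`, `V = S⁻¹`.
For the non-symmetry, `C₀ = S Sᵀ` with `S = [[1,0],[1,1]]`, `A = [1 0]`, `Γ = 1` gives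
`S D⁺D S⁻¹ = [[1,0],[1,0]]`.
-/

open Matrix

section Sandwich

variable {α : Type*} [Monoid α] {S T U V : α}

theorem sandwich_mul_sandwich (P D : α) (hUT : U * T = 1) :
    S * P * U * (T * D * V) = S * P * D * V := by
  simp only [← mul_assoc, mul_assoc (S * P) U T, hUT, mul_one]

theorem sandwich_mul_sandwich_mul_sandwich (P D : α) (hVS : V * S = 1) (hUT : U * T = 1) :
    S * P * U * (T * D * V) * (S * P * U) = S * (P * D * P) * U := by
  rw [sandwich_mul_sandwich P D hUT]
  simp only [← mul_assoc, mul_assoc (S * P * D) V S, hVS, mul_one]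

end Sandwich

section DiagonalPinv

variable {n K : Type*} [DecidableEq n] [DivisionRing K]

/-- Since `0⁻¹ = 0` in Lean, the diagonal pseudo-inverse is just the pointwise inverse. -/
theorem diagonal_pinv_eq [DecidableEq K] (μ : n → K) :
    diagonal (fun i => if μ i = 0 then (0 : K) else (μ i)⁻¹) = diagonal μ⁻¹ := by
  congr 1
  ext i
  split_ifs with h <;> simp [h]

variable [Fintype n]

theorem diagonal_inv_mul_diagonal_mul_diagonal_inv (μ : n → K) :
    diagonal μ⁻¹ * diagonal μ * diagonal μ⁻¹ = diagonal μ⁻¹ := by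
  simp only [diagonal_mul_diagonal]
  congr 1
  ext i
  simpa using mul_inv_mul_cancel (μ i)⁻¹

theorem diagonal_mul_diagonal_inv_mul_diagonal (μ : n → K) :
    diagonal μ * diagonal μ⁻¹ * diagonal μ = diagonal μ := by
  simp only [diagonal_mul_diagonal]
  congr 1
  ext i
  exact mul_inv_mul_cancel (μ i)

end DiagonalPinv

section Counterexample

private def lowerShear : Matrix (Fin 2) (Fin 2) ℝ := !![1, 0; 1, 1]

private theorem lowerShear_inv : lowerShear⁻¹ = !![1, 0; -1, 1] :=
  inv_eq_left_inv (by ext i j; fin_cases i <;> fin_cases j <;> simp [lowerShear])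

private theorem isUnit_det_lowerShear : IsUnit lowerShear.det := by
  simp [lowerShear, det_fin_two_of]

private theorem posDef_lowerShear_mul_transpose : (lowerShear * lowerShearᵀ).PosDef := by
  simpa using PosDef.mul_conjTranspose_self lowerShear
    (vecMul_injective_iff_isUnit.mpr ((isUnit_iff_isUnit_det _).mpr isUnit_det_lowerShear))

theorem exists_diagonal_pinv_mul_diagonal_conj_not_isSymm :
    ∃ (n' m' : ℕ) (C₀' : Matrix (Fin n') (Fin n') ℝ) (A' : Matrix (Fin m') (Fin n') ℝ)
      (Γ' : Matrix (Fin m') (Fin m') ℝ) (S' : Matrix (Fin n') (Fin n') ℝ)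
      (μ' : Fin n' → ℝ),
      C₀'.PosDef ∧ Γ'.PosDef ∧ IsUnit S'.det ∧ (∀ i, 0 ≤ μ' i) ∧
      C₀' * A'ᵀ * Γ'⁻¹ * A' = S' * Matrix.diagonal μ' * S'⁻¹ ∧
      ¬ (S' * Matrix.diagonal (fun i => if μ' i = 0 then (0 : ℝ) else (μ' i)⁻¹) *
          Matrix.diagonal μ' * S'⁻¹).IsSymm := by
  refine ⟨2, 1, lowerShear * lowerShearᵀ, !![1, 0], 1, lowerShear, ![1, 0],
    posDef_lowerShear_mul_transpose, PosDef.one, isUnit_det_lowerShear, ?_, ?_, ?_⟩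
  · intro i
    fin_cases i <;> simp
  · rw [lowerShear_inv]
    ext i j
    fin_cases i <;> fin_cases j <;>
      simp [lowerShear, mul_apply, Fin.sum_univ_two, vecMul, dotProduct]
  · rw [lowerShear_inv, diagonal_pinv_eq]
    intro h
    have h01 := congrFun (congrFun h.eq 0) 1
    simp [lowerShear, mul_apply, Fin.sum_univ_two, vecMul, dotProduct] at h01

end Counterexample

theorem generalized_inverse_properties_general {n m : ℕ}
    (C₀ : Matrix (Fin n) (Fin n) ℝ) (hC₀ : C₀.PosDef)
    (A : Matrix (Fin m) (Fin n) ℝ)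
    (Γ : Matrix (Fin m) (Fin m) ℝ)
    (S : Matrix (Fin n) (Fin n) ℝ) (μ : Fin n → ℝ)
    (hS : IsUnit S.det)
    (hdiag : C₀ * Aᵀ * Γ⁻¹ * A = S * Matrix.diagonal μ * S⁻¹)
    (Minus : Matrix (Fin n) (Fin n) ℝ)
    (hMinus : Minus =
      S * Matrix.diagonal (fun i => if μ i = 0 then (0 : ℝ) else (μ i)⁻¹) * S⁻¹ * C₀) :
    Minus * (Aᵀ * Γ⁻¹ * A) * Minus = Minus ∧
    (Aᵀ * Γ⁻¹ * A) * Minus * (Aᵀ * Γ⁻¹ * A) = Aᵀ * Γ⁻¹ * A ∧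
    Minus * (Aᵀ * Γ⁻¹ * A) =
      S * Matrix.diagonal (fun i => if μ i = 0 then (0 : ℝ) else (μ i)⁻¹) *
        Matrix.diagonal μ * S⁻¹ ∧
    -- in general `(AᵀΓ⁻¹A)⁻(AᵀΓ⁻¹A) = S D⁺D S⁻¹` is not symmetric:
    ∃ (n' m' : ℕ) (C₀' : Matrix (Fin n') (Fin n') ℝ) (A' : Matrix (Fin m') (Fin n') ℝ)
      (Γ' : Matrix (Fin m') (Fin m') ℝ) (S' : Matrix (Fin n') (Fin n') ℝ)
      (μ' : Fin n' → ℝ),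
      C₀'.PosDef ∧ Γ'.PosDef ∧ IsUnit S'.det ∧ (∀ i, 0 ≤ μ' i) ∧
      C₀' * A'ᵀ * Γ'⁻¹ * A' = S' * Matrix.diagonal μ' * S'⁻¹ ∧
      ¬ (S' * Matrix.diagonal (fun i => if μ' i = 0 then (0 : ℝ) else (μ' i)⁻¹) *
          Matrix.diagonal μ' * S'⁻¹).IsSymm := by
  have hC₀det : IsUnit C₀.det := (isUnit_iff_isUnit_det C₀).mp hC₀.isUnit
  have hVS : S⁻¹ * S = 1 := nonsing_inv_mul S hS
  have hUT : S⁻¹ * C₀ * (C₀⁻¹ * S) = 1 := by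
    rw [mul_assoc, ← mul_assoc C₀, mul_nonsing_inv C₀ hC₀det, one_mul, hVS]
  have hG : Aᵀ * Γ⁻¹ * A = C₀⁻¹ * S * diagonal μ * S⁻¹ := by
    have hC₀G : C₀ * (Aᵀ * Γ⁻¹ * A) = S * diagonal μ * S⁻¹ := by
      simpa only [Matrix.mul_assoc] using hdiag
    rw [← nonsing_inv_mul_cancel_left (A := C₀) (Aᵀ * Γ⁻¹ * A) hC₀det, hC₀G]
    simp only [mul_assoc]
  have hMinus' : Minus = S * diagonal μ⁻¹ * (S⁻¹ * C₀) := by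
    rw [hMinus, diagonal_pinv_eq, ← mul_assoc]
  rw [hG, hMinus', diagonal_pinv_eq]
  refine ⟨?_, ?_, sandwich_mul_sandwich _ _ hUT,
    exists_diagonal_pinv_mul_diagonal_conj_not_isSymm⟩
  · rw [sandwich_mul_sandwich_mul_sandwich _ _ hVS hUT,
      diagonal_inv_mul_diagonal_mul_diagonal_inv]
  · rw [sandwich_mul_sandwich_mul_sandwich _ _ hUT hVS,
      diagonal_mul_diagonal_inv_mul_diagonal]

theorem generalized_inverse_properties {n m k : ℕ} (hk : k ≤ n)
    (C₀ : Matrix (Fin n) (Fin n) ℝ) (hC₀ : C₀.PosDef)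
    (A : Matrix (Fin m) (Fin n) ℝ)
    (Γ : Matrix (Fin m) (Fin m) ℝ) (hΓ : Γ.PosDef)
    (S : Matrix (Fin n) (Fin n) ℝ) (μ : Fin n → ℝ)
    (hS : IsUnit S.det)
    (hμpos : ∀ i : Fin n, (i : ℕ) < k → 0 < μ i)
    (hμzero : ∀ i : Fin n, k ≤ (i : ℕ) → μ i = 0)
    (hdiag : C₀ * Aᵀ * Γ⁻¹ * A = S * Matrix.diagonal μ * S⁻¹)
    (Minus : Matrix (Fin n) (Fin n) ℝ)
    (hMinus : Minus =
      S * Matrix.diagonal (fun i => if μ i = 0 then (0 : ℝ) else (μ i)⁻¹) * S⁻¹ * C₀) :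
    Minus * (Aᵀ * Γ⁻¹ * A) * Minus = Minus ∧
    (Aᵀ * Γ⁻¹ * A) * Minus * (Aᵀ * Γ⁻¹ * A) = Aᵀ * Γ⁻¹ * A ∧
    Minus * (Aᵀ * Γ⁻¹ * A) =
      S * Matrix.diagonal (fun i => if μ i = 0 then (0 : ℝ) else (μ i)⁻¹) *
        Matrix.diagonal μ * S⁻¹ ∧
    -- in general `(AᵀΓ⁻¹A)⁻(AᵀΓ⁻¹A) = S D⁺D S⁻¹` is not symmetric:
    ∃ (n' m' : ℕ) (C₀' : Matrix (Fin n') (Fin n') ℝ) (A' : Matrix (Fin m') (Fin n') ℝ)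
      (Γ' : Matrix (Fin m') (Fin m') ℝ) (S' : Matrix (Fin n') (Fin n') ℝ)
      (μ' : Fin n' → ℝ),
      C₀'.PosDef ∧ Γ'.PosDef ∧ IsUnit S'.det ∧ (∀ i, 0 ≤ μ' i) ∧
      C₀' * A'ᵀ * Γ'⁻¹ * A' = S' * Matrix.diagonal μ' * S'⁻¹ ∧
      ¬ (S' * Matrix.diagonal (fun i => if μ' i = 0 then (0 : ℝ) else (μ' i)⁻¹) *
          Matrix.diagonal μ' * S'⁻¹).IsSymm :=
  generalized_inverse_properties_general C₀ hC₀ A Γ S μ hS hdiag Minus hMinus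
end

section
/- Assume y = Au† (noise-free data) and let x(t) solve ẋ(t) = −C(t)AᵀΓ⁻¹(Ax(t)−y), x(0)=x₀, with C(t) = C₀(E+αtAᵀΓ⁻¹AC₀)⁻¹. Let x† be the ‖·‖_{C₀}-minimal solution of Ax = Au† relative to x₀. Then there is a constant K > 0 such that ‖x(t) − x†‖ ≤ K (1/(μ_k t))^{1/α} and ‖Ax(t) − y‖_Γ ≤ K (μ₁/t)^{1/α} for all t > 0, where μ₁ ≥ … ≥ μ_k > 0 are the nonzero eigenvalues of C₀AᵀΓ⁻¹A. -/
/-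
Write `B = Aᵀ Γ⁻¹ A` and `C₀ B = S diag(μ) S⁻¹`.  The push-through identity gives
`C(t) B = S diag(μᵢ / (1 + α t μᵢ)) S⁻¹`.  Since `Γ⁻¹` is positive definite, the eigenvectors of
`C₀ B` for the eigenvalue `0` lie in `ker A`; hence `A x† = y` and the error `e = x(t) - x†` obeys
`ė = -C(t) B e`.  In the eigen-coordinates `w = S⁻¹ e` the flow decouples into the scalar equations
`ẇᵢ = -μᵢ / (1 + α t μᵢ) wᵢ`, solved by `wᵢ(t) = wᵢ(0) (1 + α t μᵢ)^(-1/α)`.  The choice of `x†`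
kills exactly the coordinates with `μᵢ = 0`, and for the others `1 + α t μᵢ ≥ μ_k t`.  Both norms
are quadratic forms in `w(t)`, hence bounded by a constant times `(μ_k t)^(-1/α)`; finally
`(μ_k t)^(-1/α) = (μ₁ μ_k)^(-1/α) (μ₁ / t)^(1/α)`.
-/

open Matrix

variable {ι κ : Type*} [Fintype ι]

theorem inv_mul_one_sub_mul_diagonal_mul_inv [DecidableEq ι] {S : Matrix ι ι ℝ}
    (hS : IsUnit S.det) (e : ι → ℝ) :
    S⁻¹ * (1 - S * diagonal e * S⁻¹) = diagonal (1 - e) * S⁻¹ := by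
  rw [show diagonal (1 - e) = 1 - diagonal e by rw [← diagonal_one, diagonal_sub]; rfl,
    Matrix.sub_mul, Matrix.mul_sub, Matrix.one_mul, Matrix.mul_one, Matrix.mul_assoc,
    nonsing_inv_mul_cancel_left _ _ hS]

theorem mulVec_add_one_sub_mul_diagonal_mul_inv_mulVec_sub [DecidableEq ι] {A : Matrix κ ι ℝ}
    {S : Matrix ι ι ℝ} {e : ι → ℝ} (hA : A * (S * diagonal e) = 0) (x₀ u : ι → ℝ) :
    A *ᵥ (x₀ + (1 - S * diagonal e * S⁻¹) *ᵥ (u - x₀)) = A *ᵥ u := by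
  rw [mulVec_add, mulVec_mulVec, Matrix.mul_sub, Matrix.mul_one, ← Matrix.mul_assoc, hA,
    Matrix.zero_mul, sub_zero, mulVec_sub, add_sub_cancel]

theorem mul_inv_one_add_smul_mul_mul_eq [DecidableEq ι] {K : Type*} [Field K]
    {C₀ B S : Matrix ι ι K} {μ : ι → K} (hC₀ : IsUnit C₀.det) (hS : IsUnit S.det)
    (h : C₀ * B = S * diagonal μ * S⁻¹) {c : K} (hc : ∀ i, 1 + c * μ i ≠ 0) :
    C₀ * (1 + c • (B * C₀))⁻¹ * B = S * diagonal (fun i => μ i / (1 + c * μ i)) * S⁻¹ := by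
  have hconj : 1 + c • (B * C₀) = C₀⁻¹ * (S * diagonal (fun i => 1 + c * μ i) * S⁻¹) * C₀ := by
    have hone : diagonal (fun i => 1 + c * μ i) = 1 + c • diagonal μ := by
      rw [← diagonal_one, ← diagonal_smul, diagonal_add]; rfl
    rw [hone, Matrix.mul_add, Matrix.add_mul, Matrix.mul_one, mul_nonsing_inv _ hS,
      Matrix.mul_smul, Matrix.smul_mul, ← h]
    simp only [Matrix.mul_add, Matrix.add_mul, Matrix.mul_one, Matrix.mul_smul, Matrix.smul_mul,
      ← Matrix.mul_assoc, nonsing_inv_mul _ hC₀, Matrix.one_mul]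
  have hinv : (diagonal (fun i => 1 + c * μ i))⁻¹ = diagonal (fun i => (1 + c * μ i)⁻¹) :=
    inv_eq_left_inv (by rw [diagonal_mul_diagonal]; simp [inv_mul_cancel₀ (hc _)])
  simp only [hconj, Matrix.mul_inv_rev, hinv, nonsing_inv_nonsing_inv _ hC₀,
    nonsing_inv_nonsing_inv _ hS, Matrix.mul_assoc, mul_nonsing_inv_cancel_left _ _ hC₀]
  rw [h]
  simp only [Matrix.mul_assoc, nonsing_inv_mul_cancel_left _ _ hS]
  simp only [← Matrix.mul_assoc, diagonal_mul_diagonal, inv_mul_eq_div]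

variable [Fintype κ]

theorem Matrix.PosDef.mul_eq_zero_of_transpose_mul_mul_mul_eq_zero_s14 [DecidableEq κ]
    {Q : Matrix κ κ ℝ} (hQ : Q.PosDef) {A : Matrix κ ι ℝ} {N : Matrix ι ι ℝ}
    (h : Aᵀ * Q * A * N = 0) : A * N = 0 := by
  have hquad : (A * N)ᵀ * Q * (A * N) = 0 := by
    rw [transpose_mul, show Nᵀ * Aᵀ * Q * (A * N) = Nᵀ * (Aᵀ * Q * A * N) by
      simp only [Matrix.mul_assoc], h, Matrix.mul_zero]
  generalize A * N = M at hquad ⊢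
  ext l j
  by_contra hne
  have hcol : Mᵀ j ≠ 0 := fun h0 => hne (by simpa using congrFun h0 l)
  have hpos := hQ.dotProduct_mulVec_pos hcol
  have hdiag : Mᵀ j ⬝ᵥ (Q *ᵥ Mᵀ j) = (Mᵀ * Q * M) j j := by
    simp only [mul_apply, dotProduct, mulVec, transpose_apply, Finset.sum_mul, Finset.mul_sum]
    rw [Finset.sum_comm]
    ring_nf
  rw [star_trivial, hdiag, hquad] at hpos
  exact lt_irrefl _ hpos

theorem mul_mul_diagonal_eq_zero [DecidableEq ι] [DecidableEq κ] {C₀ S : Matrix ι ι ℝ}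
    {A : Matrix κ ι ℝ} {Γ : Matrix κ κ ℝ} {μ e : ι → ℝ} (hC₀ : IsUnit C₀.det) (hΓ : Γ.PosDef)
    (hS : IsUnit S.det) (hdiag : C₀ * Aᵀ * Γ⁻¹ * A = S * diagonal μ * S⁻¹)
    (hμe : ∀ i, μ i * e i = 0) :
    A * (S * diagonal e) = 0 := by
  refine hΓ.inv.mul_eq_zero_of_transpose_mul_mul_mul_eq_zero_s14 ?_
  calc Aᵀ * Γ⁻¹ * A * (S * diagonal e)
      = C₀⁻¹ * (C₀ * Aᵀ * Γ⁻¹ * A) * (S * diagonal e) := by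
        simp only [Matrix.mul_assoc, nonsing_inv_mul_cancel_left _ _ hC₀]
    _ = C₀⁻¹ * S * (diagonal μ * diagonal e) := by
        rw [hdiag]
        simp only [Matrix.mul_assoc, nonsing_inv_mul_cancel_left _ _ hS]
    _ = 0 := by simp [hμe]

theorem hasDerivAt_mulVec_sub_of_mul_eq_diagonal_mul [DecidableEq κ] {x : ℝ → ι → ℝ}
    {G : Matrix ι ι ℝ} {T : Matrix κ ι ℝ} {d : κ → ℝ} {z : ι → ℝ} {t : ℝ}
    (hG : T * G = diagonal d * T)
    (hx : ∀ j, HasDerivAt (fun s => x s j) (-(G *ᵥ (x t - z)) j) t) (i : κ) :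
    HasDerivAt (fun s => (T *ᵥ (x s - z)) i) (-(d i * (T *ᵥ (x t - z)) i)) t := by
  have hsum : HasDerivAt (fun s => ∑ j, T i j * (x s j - z j))
      (∑ j, T i j * -(G *ᵥ (x t - z)) j) t :=
    HasDerivAt.fun_sum fun j _ => ((hx j).sub_const (z j)).const_mul (T i j)
  refine hsum.congr_deriv ?_
  have hT : T *ᵥ (G *ᵥ (x t - z)) = diagonal d *ᵥ (T *ᵥ (x t - z)) := by
    rw [mulVec_mulVec, hG, ← mulVec_mulVec]
  have hi := congrFun hT i
  rw [mulVec_diagonal] at hi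
  simp only [mul_neg, Finset.sum_neg_distrib, ← hi]
  rfl

theorem eq_mul_one_add_mul_rpow_of_hasDerivAt {f : ℝ → ℝ} {a b t : ℝ} (ha : 0 < a) (hb : 0 ≤ b)
    (ht : 0 ≤ t) (hf : ∀ s, 0 ≤ s → HasDerivAt f (-(b / (1 + a * s * b) * f s)) s) :
    f t = f 0 * (1 + a * t * b) ^ (-(1 / a)) := by
  have hpos : ∀ s, 0 ≤ s → 0 < 1 + a * s * b := fun s hs => by positivity
  -- `f s * (1 + a s b) ^ (1 / a)` is a first integral
  set g : ℝ → ℝ := fun s => f s * (1 + a * s * b) ^ (1 / a)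
  have hg : ∀ s, 0 ≤ s → HasDerivAt g 0 s := by
    intro s hs
    have hlin : HasDerivAt (fun u => 1 + a * u * b) (a * b) s := by
      simpa using (((hasDerivAt_id s).const_mul a).mul_const b).const_add 1
    refine ((hf s hs).mul (hlin.rpow_const (p := 1 / a) (Or.inl (hpos s hs).ne'))).congr_deriv ?_
    rw [Real.rpow_sub_one (hpos s hs).ne']
    field_simp
    ring
  have hconst := constant_of_has_deriv_right_zero (f := g) (a := 0) (b := t)
    (fun s hs => (hg s hs.1).continuousAt.continuousWithinAt)
    (fun s hs => (hg s hs.1).hasDerivWithinAt) t ⟨ht, le_rfl⟩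
  simp only [g, mul_zero, zero_mul, add_zero, Real.one_rpow, mul_one] at hconst
  rw [Real.rpow_neg (hpos t ht).le, ← hconst, mul_assoc,
    mul_inv_cancel₀ (Real.rpow_pos_of_pos (hpos t ht) _).ne', mul_one]

theorem one_add_mul_rpow_neg_le_rpow {α m μ t : ℝ} (hα : 1 ≤ α) (hm : 0 < m) (hmμ : m ≤ μ)
    (ht : 0 < t) : (1 + α * t * μ) ^ (-(1 / α)) ≤ (1 / (m * t)) ^ (1 / α) := by
  have hμ : 0 ≤ μ := hm.le.trans hmμ
  have hmt : m * t ≤ 1 + α * t * μ := by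
    nlinarith [mul_le_mul_of_nonneg_right hmμ ht.le,
      mul_nonneg (sub_nonneg.2 hα) (mul_nonneg ht.le hμ)]
  rw [Real.rpow_neg (by positivity), one_div (m * t), Real.inv_rpow (by positivity)]
  gcongr

theorem abs_le_of_hasDerivAt_eq_neg_div_mul {f : ℝ → ℝ} {α b m t : ℝ} (hα : 1 ≤ α) (hm : 0 < m)
    (hb : 0 ≤ b) (hmb : f 0 ≠ 0 → m ≤ b)
    (hf : ∀ s, 0 ≤ s → HasDerivAt f (-(b / (1 + α * s * b) * f s)) s) (ht : 0 < t) :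
    |f t| ≤ |f 0| * (1 / (m * t)) ^ (1 / α) := by
  rw [eq_mul_one_add_mul_rpow_of_hasDerivAt (by linarith) hb ht.le hf, abs_mul,
    abs_of_pos (Real.rpow_pos_of_pos (by positivity) _)]
  by_cases h0 : f 0 = 0
  · simp [h0]
  · gcongr
    exact one_add_mul_rpow_neg_le_rpow hα hm (hmb h0) ht

theorem hasDerivAt_inv_mulVec_sub_of_hasDerivAt_eq_neg_mul_mulVec [DecidableEq ι] [DecidableEq κ]
    {C₀ S : Matrix ι ι ℝ} {A : Matrix κ ι ℝ} {Γ : Matrix κ κ ℝ} {μ : ι → ℝ} {α t : ℝ}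
    {x : ℝ → ι → ℝ} {z : ι → ℝ} (hα : 0 ≤ α) (hμ : ∀ i, 0 ≤ μ i) (ht : 0 ≤ t)
    (hC₀ : IsUnit C₀.det) (hS : IsUnit S.det) (hdiag : C₀ * Aᵀ * Γ⁻¹ * A = S * diagonal μ * S⁻¹)
    (hx : ∀ j, HasDerivAt (fun s => x s j)
      (-((C₀ * (1 + (α * t) • (Aᵀ * Γ⁻¹ * A * C₀))⁻¹ * Aᵀ * Γ⁻¹) *ᵥ (A *ᵥ (x t - z))) j) t)
    (i : ι) :
    HasDerivAt (fun s => (S⁻¹ *ᵥ (x s - z)) i)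
      (-(μ i / (1 + α * t * μ i) * (S⁻¹ *ᵥ (x t - z)) i)) t := by
  have hres := mul_inv_one_add_smul_mul_mul_eq (B := Aᵀ * Γ⁻¹ * A) (c := α * t) hC₀ hS
    (by simpa only [Matrix.mul_assoc] using hdiag) fun i =>
    (add_pos_of_pos_of_nonneg one_pos (mul_nonneg (mul_nonneg hα ht) (hμ i))).ne'
  refine hasDerivAt_mulVec_sub_of_mul_eq_diagonal_mul (T := S⁻¹)
    (d := fun i => μ i / (1 + α * t * μ i))
    (G := C₀ * (1 + (α * t) • (Aᵀ * Γ⁻¹ * A * C₀))⁻¹ * (Aᵀ * Γ⁻¹ * A)) ?_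
    (fun j => by simpa only [mulVec_mulVec, Matrix.mul_assoc] using hx j) i
  rw [hres]
  simp only [Matrix.mul_assoc, nonsing_inv_mul_cancel_left _ _ hS]

theorem abs_inv_mulVec_sub_le_of_hasDerivAt [DecidableEq ι] [DecidableEq κ]
    {C₀ S : Matrix ι ι ℝ} {A : Matrix κ ι ℝ} {Γ : Matrix κ κ ℝ} {μ e : ι → ℝ} {α m : ℝ}
    {C : ℝ → Matrix ι ι ℝ} {x : ℝ → ι → ℝ} {x₀ u xdag : ι → ℝ} {y : κ → ℝ}
    (hα : 1 ≤ α) (hm : 0 < m) (hμ : ∀ i, 0 ≤ μ i) (hmμ : ∀ i, e i ≠ 1 → m ≤ μ i)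
    (hC₀ : IsUnit C₀.det) (hS : IsUnit S.det) (hdiag : C₀ * Aᵀ * Γ⁻¹ * A = S * diagonal μ * S⁻¹)
    (hC : ∀ t, C t = C₀ * (1 + (α * t) • (Aᵀ * Γ⁻¹ * A * C₀))⁻¹)
    (hxdag : xdag = x₀ + (1 - S * diagonal e * S⁻¹) *ᵥ (u - x₀)) (hy : A *ᵥ xdag = y)
    (hx0 : x 0 = x₀)
    (hx : ∀ t, 0 ≤ t → ∀ i,
      HasDerivAt (fun s => x s i) (-((C t * Aᵀ * Γ⁻¹) *ᵥ (A *ᵥ x t - y)) i) t)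
    {t : ℝ} (ht : 0 < t) (i : ι) :
    |(S⁻¹ *ᵥ (x t - xdag)) i| ≤ |(S⁻¹ *ᵥ (x₀ - xdag)) i| * (1 / (m * t)) ^ (1 / α) := by
  subst hy hx0
  -- `S⁻¹ (x₀ - x†) = -diag(1 - e) S⁻¹ (u - x₀)` vanishes where `e i = 1`
  have hw0 : (S⁻¹ *ᵥ (x 0 - xdag)) i ≠ 0 → m ≤ μ i := fun hi => hmμ i fun he => hi <| by
    rw [hxdag, sub_add_cancel_left, mulVec_neg, mulVec_mulVec,
      inv_mul_one_sub_mul_diagonal_mul_inv hS, ← mulVec_mulVec, Pi.neg_apply, mulVec_diagonal]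
    simp [he]
  exact abs_le_of_hasDerivAt_eq_neg_div_mul hα hm (hμ i) hw0 (fun s hs =>
    hasDerivAt_inv_mulVec_sub_of_hasDerivAt_eq_neg_mul_mulVec (by linarith) hμ hs hC₀ hS hdiag
      (fun j => by simpa only [hC, mulVec_sub] using hx s hs j) i) ht

theorem dotProduct_mulVec_le_of_abs_le (Q : Matrix ι ι ℝ) {v c : ι → ℝ} {r : ℝ}
    (h : ∀ i, |v i| ≤ c i * r) : v ⬝ᵥ (Q *ᵥ v) ≤ c ⬝ᵥ (Q.map abs *ᵥ c) * r ^ 2 := by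
  simp only [dotProduct, mulVec, Finset.mul_sum, Finset.sum_mul, map_apply]
  refine Finset.sum_le_sum fun i _ => Finset.sum_le_sum fun j _ => ?_
  calc v i * (Q i j * v j) ≤ |v i| * (|Q i j| * |v j|) := by
        rw [← abs_mul, ← abs_mul]; exact le_abs_self _
    _ ≤ (c i * r) * (|Q i j| * (c j * r)) := by
        gcongr
        · exact (abs_nonneg _).trans (h i)
        · exact h i
        · exact h j
    _ = c i * (|Q i j| * c j) * r ^ 2 := by ring

theorem sqrt_mulVec_dotProduct_le (M : Matrix κ ι ℝ) (Q : Matrix κ κ ℝ) {v c : ι → ℝ} {r : ℝ}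
    (hr : 0 ≤ r) (h : ∀ i, |v i| ≤ c i * r) :
    √((M *ᵥ v) ⬝ᵥ (Q *ᵥ (M *ᵥ v))) ≤ √(c ⬝ᵥ ((Mᵀ * Q * M).map abs *ᵥ c)) * r := by
  have hquad : (M *ᵥ v) ⬝ᵥ (Q *ᵥ (M *ᵥ v)) = v ⬝ᵥ ((Mᵀ * Q * M) *ᵥ v) := by
    rw [dotProduct_mulVec, dotProduct_mulVec, vecMul_vecMul, dotProduct_mulVec v,
      ← vecMul_transpose, vecMul_vecMul, Matrix.mul_assoc]
  rw [hquad, ← Real.sqrt_sq hr, ← Real.sqrt_mul' _ (sq_nonneg r)]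
  exact Real.sqrt_le_sqrt (dotProduct_mulVec_le_of_abs_le _ h)

theorem exists_sqrt_dotProduct_le_rpow [DecidableEq ι] {S : Matrix ι ι ℝ} (hS : IsUnit S.det)
    (N : Matrix κ ι ℝ) (Q : Matrix κ κ ℝ) {v : ℝ → ι → ℝ} {c : ι → ℝ} {a b p : ℝ} (ha : 0 < a)
    (hb : 0 < b) (hv : ∀ t, 0 < t → ∀ i, |(S⁻¹ *ᵥ v t) i| ≤ c i * (1 / (a * t)) ^ p) :
    ∃ K, 0 < K ∧ ∀ t, 0 < t → √(v t ⬝ᵥ v t) ≤ K * (1 / (a * t)) ^ p ∧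
      √((N *ᵥ v t) ⬝ᵥ (Q *ᵥ (N *ᵥ v t))) ≤ K * (b / t) ^ p := by
  have hSv : ∀ t, S *ᵥ (S⁻¹ *ᵥ v t) = v t := fun t => by
    rw [mulVec_mulVec, mul_nonsing_inv _ hS, one_mulVec]
  set K₁ := √(c ⬝ᵥ ((Sᵀ * 1 * S).map abs *ᵥ c))
  set K₂ := √(c ⬝ᵥ (((N * S)ᵀ * Q * (N * S)).map abs *ᵥ c))
  set c₂ := (1 / (b * a)) ^ p
  have hK₁ : 0 ≤ K₁ := by positivity
  have hK₂ : 0 ≤ K₂ * c₂ := by positivity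
  refine ⟨K₁ + K₂ * c₂ + 1, by positivity, fun t ht => ⟨?_, ?_⟩⟩
  · calc √(v t ⬝ᵥ v t) = √((S *ᵥ (S⁻¹ *ᵥ v t)) ⬝ᵥ (1 *ᵥ (S *ᵥ (S⁻¹ *ᵥ v t)))) := by
          rw [one_mulVec, hSv]
      _ ≤ K₁ * (1 / (a * t)) ^ p := sqrt_mulVec_dotProduct_le _ _ (by positivity) (hv t ht)
      _ ≤ _ := by gcongr; linarith
  · calc √((N *ᵥ v t) ⬝ᵥ (Q *ᵥ (N *ᵥ v t)))
        = √(((N * S) *ᵥ (S⁻¹ *ᵥ v t)) ⬝ᵥ (Q *ᵥ ((N * S) *ᵥ (S⁻¹ *ᵥ v t)))) := by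
          rw [← mulVec_mulVec, hSv]
      _ ≤ K₂ * (1 / (a * t)) ^ p := sqrt_mulVec_dotProduct_le _ _ (by positivity) (hv t ht)
      _ = K₂ * c₂ * (b / t) ^ p := by
          rw [mul_assoc, ← Real.mul_rpow (by positivity) (by positivity)]
          congr 2
          field_simp
      _ ≤ _ := by gcongr; linarith

theorem convergence_rates {n m k : ℕ} (hkpos : 0 < k) (hk : k ≤ n) (α : ℝ) (hα : 1 ≤ α)
    (C₀ : Matrix (Fin n) (Fin n) ℝ) (hC₀ : C₀.PosDef)
    (A : Matrix (Fin m) (Fin n) ℝ)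
    (Γ : Matrix (Fin m) (Fin m) ℝ) (hΓ : Γ.PosDef)
    (S : Matrix (Fin n) (Fin n) ℝ) (μ : Fin n → ℝ)
    (hS : IsUnit S.det)
    (hμmono : ∀ i j : Fin n, i ≤ j → μ j ≤ μ i)
    (hμpos : ∀ i : Fin n, (i : ℕ) < k → 0 < μ i)
    (hμzero : ∀ i : Fin n, k ≤ (i : ℕ) → μ i = 0)
    (hdiag : C₀ * Aᵀ * Γ⁻¹ * A = S * Matrix.diagonal μ * S⁻¹)
    (Einf : Matrix (Fin n) (Fin n) ℝ)
    (hEinf : Einf = Matrix.diagonal (fun i : Fin n => if (i : ℕ) < k then (0 : ℝ) else 1))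
    (Cinf : Matrix (Fin n) (Fin n) ℝ) (hCinf : Cinf = S * Einf * S⁻¹ * C₀)
    (C : ℝ → Matrix (Fin n) (Fin n) ℝ)
    (hC : ∀ t : ℝ, C t = C₀ * (1 + (α * t) • (Aᵀ * Γ⁻¹ * A * C₀))⁻¹)
    (udag : Fin n → ℝ) (y : Fin m → ℝ) (hy : y = A *ᵥ udag)
    (x₀ : Fin n → ℝ) (x : ℝ → Fin n → ℝ) (hx0 : x 0 = x₀)
    (hx : ∀ t : ℝ, 0 ≤ t → ∀ i : Fin n,
      HasDerivAt (fun s => x s i)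
        (-((C t * Aᵀ * Γ⁻¹) *ᵥ (A *ᵥ x t - y)) i) t)
    (xdag : Fin n → ℝ)
    (hxdag : xdag = x₀ + (1 - Cinf * C₀⁻¹) *ᵥ (udag - x₀)) :
    ∃ K : ℝ, 0 < K ∧ ∀ t : ℝ, 0 < t →
      Real.sqrt ((x t - xdag) ⬝ᵥ (x t - xdag)) ≤
        K * (1 / (μ ⟨k - 1, by omega⟩ * t)) ^ ((1 : ℝ) / α) ∧
      Real.sqrt ((A *ᵥ x t - y) ⬝ᵥ (Γ⁻¹ *ᵥ (A *ᵥ x t - y))) ≤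
        K * (μ ⟨0, by omega⟩ / t) ^ ((1 : ℝ) / α) := by
  set e : Fin n → ℝ := fun i => if (i : ℕ) < k then 0 else 1
  have hC₀u : IsUnit C₀.det := hC₀.det_pos.ne'.isUnit
  have hμ : ∀ i, 0 ≤ μ i := fun i => by
    by_cases h : (i : ℕ) < k
    exacts [(hμpos i h).le, (hμzero i (not_lt.1 h)).ge]
  have hμe : ∀ i, μ i * e i = 0 := fun i => by
    by_cases h : (i : ℕ) < k
    · simp [e, h]
    · simp [e, h, hμzero i (not_lt.1 h)]
  have hμk : 0 < μ ⟨k - 1, by omega⟩ := hμpos _ (by simp only; omega)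
  have hmμ : ∀ i, e i ≠ 1 → μ ⟨k - 1, by omega⟩ ≤ μ i := fun i hi =>
    hμmono i _ (Fin.mk_le_mk.2 (by by_contra h; exact hi (by simp [e]; omega)))
  rw [hCinf, hEinf, mul_nonsing_inv_cancel_right _ _ hC₀u] at hxdag
  have hAxdag : A *ᵥ xdag = y := by
    rw [hy, hxdag, mulVec_add_one_sub_mul_diagonal_mul_inv_mulVec_sub
      (mul_mul_diagonal_eq_zero hC₀u hΓ hS hdiag hμe)]
  obtain ⟨K, hK, hbound⟩ := exists_sqrt_dotProduct_le_rpow hS A Γ⁻¹ hμk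
    (hμpos ⟨0, by omega⟩ hkpos) fun t ht i =>
      abs_inv_mulVec_sub_le_of_hasDerivAt hα hμk hμ hmμ hC₀u hS hdiag hC hxdag hAxdag hx0 hx ht i
  refine ⟨K, hK, fun t ht => ?_⟩
  simpa only [mulVec_sub, hAxdag] using hbound t ht
end

section
/- Let {uʲ(t)}ⱼ₌₁ᴶ solve the deterministic EKI u̇ʲ = −C(t)AᵀΓ⁻¹(Auʲ − y) where C(t) is the empirical covariance. Let eʲ(t) = uʲ(t) − m(t) be the deviations from the sample mean and V_e(t) = (1/(2J))∑ⱼ‖eʲ(t)‖². Then V̇_e(t) = −(1/J²) ∑_{i,j} ⟨eⁱ, eʲ⟩ ⟨Aeⁱ, Aeʲ⟩_Γ ≤ 0, i.e. the ensemble spread is nonincreasing. -/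
/-! The drift `-C Aᵀ Γ⁻¹ (A u - y)` is affine in `u` with the same linear part for
every particle, so subtracting the mean removes the constant and the deviations obey
`ė = -C Aᵀ Γ⁻¹ A e`. As `C` is the average of the `eⁱ ⊗ eⁱ`, the derivative of `V_e` is `-J⁻²`
times the sum of all entries of the Hadamard product of the Gram matrices `⟨eⁱ, eʲ⟩` and
`⟨Aeⁱ, Γ⁻¹Aeʲ⟩`; that product is positive semidefinite by the Schur product theorem. -/

open Matrix Finset

section

variable {ι κ : Type*} [Fintype ι] [Fintype κ]

theorem apply_sub_average_eq_of_affine {E F : Type*} [AddCommGroup E] [Module ℝ E]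
    [AddCommGroup F] [Module ℝ F] {f : E → F} (L : E →ₗ[ℝ] F) (c : F)
    (hf : ∀ x, f x = L x + c) (x : ι → E) (j : ι) :
    f (x j) - (Fintype.card ι : ℝ)⁻¹ • ∑ i, f (x i) =
      L (x j - (Fintype.card ι : ℝ)⁻¹ • ∑ i, x i) := by
  have hcard : (Fintype.card ι : ℝ) ≠ 0 :=
    Nat.cast_ne_zero.mpr (Fintype.card_pos_iff.2 ⟨j⟩).ne'
  simp only [hf, map_sub, map_smul, map_sum, sum_add_distrib, sum_const, card_univ,
    smul_add, ← Nat.cast_smul_eq_nsmul ℝ, inv_smul_smul₀ hcard]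
  abel

theorem dotProduct_sum_vecMulVec_mulVec {R : Type*} [CommSemiring R] (x z : ι → κ → R)
    (v w : κ → R) :
    v ⬝ᵥ ((∑ i, vecMulVec (x i) (z i)) *ᵥ w) = ∑ i, (v ⬝ᵥ x i) * (z i ⬝ᵥ w) := by
  simp only [sum_mulVec, vecMulVec_mulVec, op_smul_eq_smul, dotProduct_sum, dotProduct_smul,
    smul_eq_mul, mul_comm]

theorem dotProduct_transpose_mul_mul_mulVec {R : Type*} [CommSemiring R] (A : Matrix ι κ R)
    (P : Matrix ι ι R) (x z : κ → R) :
    x ⬝ᵥ ((Aᵀ * P * A) *ᵥ z) = (A *ᵥ x) ⬝ᵥ (P *ᵥ (A *ᵥ z)) := by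
  rw [← mulVec_mulVec, ← mulVec_mulVec, dotProduct_mulVec, vecMul_transpose]

theorem sum_hadamard_nonneg {G H : Matrix ι ι ℝ} (hG : G.PosSemidef) (hH : H.PosSemidef) :
    0 ≤ ∑ i, ∑ j, G i j * H i j := by
  simpa [dotProduct, mulVec, Finset.mul_sum] using
    (hG.hadamard hH).dotProduct_mulVec_nonneg (fun _ => 1)

theorem sum_dotProduct_mul_dotProduct_mulVec_nonneg {ν : Type*} [Fintype ν] {P : Matrix κ κ ℝ}
    (hP : P.PosSemidef) (x : ι → ν → ℝ) (z : ι → κ → ℝ) :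
    0 ≤ ∑ i, ∑ j, (x i ⬝ᵥ x j) * (z i ⬝ᵥ (P *ᵥ z j)) := by
  have hG : (of x * (of x)ᵀ).PosSemidef := by
    simpa using posSemidef_self_mul_conjTranspose (of x)
  have hH : (of z * P * (of z)ᵀ).PosSemidef := by
    simpa using hP.mul_mul_conjTranspose_same (of z)
  convert sum_hadamard_nonneg hG hH using 4 with i _ j _
  · rfl
  · rw [Matrix.mul_assoc]
    rfl

end

theorem HasDerivAt.dotProduct {𝕜 ι : Type*} [NontriviallyNormedField 𝕜] [Fintype ι]
    {f g : 𝕜 → ι → 𝕜} {f' g' : ι → 𝕜} {t : 𝕜} (hf : HasDerivAt f f' t)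
    (hg : HasDerivAt g g' t) :
    HasDerivAt (fun s => f s ⬝ᵥ g s) (f' ⬝ᵥ g t + f t ⬝ᵥ g') t := by
  simp only [_root_.dotProduct, ← sum_add_distrib]
  exact HasDerivAt.fun_sum fun i _ => (hasDerivAt_pi.1 hf i).mul (hasDerivAt_pi.1 hg i)

theorem ensemble_spread_decreasing_general {n m J : ℕ}
    (A : Matrix (Fin m) (Fin n) ℝ)
    (Γ : Matrix (Fin m) (Fin m) ℝ) (hΓ : Γ.PosDef)
    (y : Fin m → ℝ)
    (u : ℝ → Fin J → Fin n → ℝ)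
    (mean : ℝ → Fin n → ℝ) (hmean : ∀ t, mean t = (J : ℝ)⁻¹ • ∑ j, u t j)
    (e : ℝ → Fin J → Fin n → ℝ) (he : ∀ t j, e t j = u t j - mean t)
    (C : ℝ → Matrix (Fin n) (Fin n) ℝ)
    (hC : ∀ t, C t = (J : ℝ)⁻¹ • ∑ j, vecMulVec (e t j) (e t j))
    (hu : ∀ t : ℝ, ∀ j : Fin J, ∀ i : Fin n,
      HasDerivAt (fun s => u s j i)
        (-((C t * Aᵀ * Γ⁻¹) *ᵥ (A *ᵥ u t j - y)) i) t)
    (Ve : ℝ → ℝ)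
    (hVe : ∀ t, Ve t = (2 * (J : ℝ))⁻¹ * ∑ j, (e t j ⬝ᵥ e t j)) :
    ∀ t : ℝ,
      HasDerivAt Ve
        (-(J : ℝ)⁻¹ ^ 2 * ∑ i, ∑ j,
          (e t i ⬝ᵥ e t j) * ((A *ᵥ e t i) ⬝ᵥ (Γ⁻¹ *ᵥ (A *ᵥ e t j)))) t ∧
      (-(J : ℝ)⁻¹ ^ 2 * ∑ i, ∑ j,
          (e t i ⬝ᵥ e t j) * ((A *ᵥ e t i) ⬝ᵥ (Γ⁻¹ *ᵥ (A *ᵥ e t j)))) ≤ 0 := by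
  intro t
  set K := C t * Aᵀ * Γ⁻¹
  have hdev : ∀ j, HasDerivAt (fun s => e s j) (-((K * A) *ᵥ e t j)) t := by
    intro j
    have hdrift := apply_sub_average_eq_of_affine (-(K * A)).mulVecLin (K *ᵥ y)
      (f := fun x => -(K *ᵥ (A *ᵥ x - y)))
      (fun x => by simp [mulVec_sub, mulVec_mulVec]; abel) (u t) j
    simp only [Fintype.card_fin, mulVecLin_apply, neg_mulVec] at hdrift
    simp only [he, hmean]
    rw [← hdrift]
    have hsum : HasDerivAt (fun s => ∑ i, u s i) (∑ i, -(K *ᵥ (A *ᵥ u t i - y))) t :=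
      HasDerivAt.fun_sum fun i _ => hasDerivAt_pi.2 (hu t i)
    exact (hasDerivAt_pi.2 (hu t j)).sub (hsum.const_smul (J : ℝ)⁻¹)
  have hquad : ∀ j, e t j ⬝ᵥ ((K * A) *ᵥ e t j) = (J : ℝ)⁻¹ * ∑ i,
      (e t i ⬝ᵥ e t j) * ((A *ᵥ e t i) ⬝ᵥ (Γ⁻¹ *ᵥ (A *ᵥ e t j))) := by
    intro j
    rw [show K * A = C t * (Aᵀ * Γ⁻¹ * A) by simp only [K, Matrix.mul_assoc],
      ← mulVec_mulVec, hC, smul_mulVec, dotProduct_smul, dotProduct_sum_vecMulVec_mulVec, smul_eq_mul]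
    simp only [dotProduct_transpose_mul_mul_mulVec, dotProduct_comm (e t j)]
  refine ⟨?_, ?_⟩
  · rw [funext hVe]
    refine (HasDerivAt.fun_sum fun j _ => (hdev j).dotProduct (hdev j)).const_mul _
      |>.congr_deriv ?_
    rw [sum_comm]
    simp only [neg_dotProduct, dotProduct_neg, dotProduct_comm ((K * A) *ᵥ e t _), hquad,
      sum_add_distrib, sum_neg_distrib, ← mul_sum]
    ring
  · exact mul_nonpos_of_nonpos_of_nonneg (neg_nonpos.2 (sq_nonneg _))
      (sum_dotProduct_mul_dotProduct_mulVec_nonneg hΓ.posSemidef.inv (e t) (A *ᵥ e t ·))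

theorem ensemble_spread_decreasing {n m J : ℕ} (hJ : 0 < J)
    (A : Matrix (Fin m) (Fin n) ℝ)
    (Γ : Matrix (Fin m) (Fin m) ℝ) (hΓ : Γ.PosDef)
    (y : Fin m → ℝ)
    (u : ℝ → Fin J → Fin n → ℝ)
    (mean : ℝ → Fin n → ℝ) (hmean : ∀ t, mean t = (J : ℝ)⁻¹ • ∑ j, u t j)
    (e : ℝ → Fin J → Fin n → ℝ) (he : ∀ t j, e t j = u t j - mean t)
    (C : ℝ → Matrix (Fin n) (Fin n) ℝ)
    (hC : ∀ t, C t = (J : ℝ)⁻¹ • ∑ j, vecMulVec (e t j) (e t j))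
    (hu : ∀ t : ℝ, ∀ j : Fin J, ∀ i : Fin n,
      HasDerivAt (fun s => u s j i)
        (-((C t * Aᵀ * Γ⁻¹) *ᵥ (A *ᵥ u t j - y)) i) t)
    (Ve : ℝ → ℝ)
    (hVe : ∀ t, Ve t = (2 * (J : ℝ))⁻¹ * ∑ j, (e t j ⬝ᵥ e t j)) :
    ∀ t : ℝ,
      HasDerivAt Ve
        (-(J : ℝ)⁻¹ ^ 2 * ∑ i, ∑ j,
          (e t i ⬝ᵥ e t j) * ((A *ᵥ e t i) ⬝ᵥ (Γ⁻¹ *ᵥ (A *ᵥ e t j)))) t ∧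
      (-(J : ℝ)⁻¹ ^ 2 * ∑ i, ∑ j,
          (e t i ⬝ᵥ e t j) * ((A *ᵥ e t i) ⬝ᵥ (Γ⁻¹ *ᵥ (A *ᵥ e t j)))) ≤ 0 :=
  ensemble_spread_decreasing_general A Γ hΓ y u mean hmean e he C hC hu Ve hVe
end
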